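/- Suppose for each ij ∈ {00, 01, 10, 11} the coordinates (x_ij, y_ij) satisfy (1/√2) − 2δ ≤ |x_ij|, |y_ij| ≤ (1/√2) + 2δ with signs matching the ideal points ((±1/√2, ±1/√2)), and p, q ≥ (1 − 4√2·δ)/2 with p, q ∈ [0, 1]. Then the Pusey expression S = p(x_00 + y_00 + x_11 + y_11) + q(x_01 − y_01 + x_10 − y_10) + (y_10 − x_10 − x_11 − y_11) − 2 satisfies S ≥ 2√2 − 2 − 16δ + 32√2·δ². -/

import Mathlib

/-!
Rewriting the expression as
`p (x₀₀ + y₀₀) + (1 - p) (-x₁₁ - y₁₁) + q (x₀₁ - y₀₁) + (1 - q) (y₁₀ - x₁₀) - 2`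
shows it is a sum of convex combinations of quantities that are each at least `2a`, where
`a = 1/√2 - 2δ` is the least admissible absolute value of a coordinate; hence it is at least
`4a - 2 = 2√2 - 2 - 8δ`, which dominates the claimed bound because `8δ (1 - 4√2 δ) ≥ 0`.
-/

lemma pusey_expression_ge {a p q x00 y00 x01 y01 x10 y10 x11 y11 : ℝ}
    (hp0 : 0 ≤ p) (hp1 : p ≤ 1) (hq0 : 0 ≤ q) (hq1 : q ≤ 1)
    (hx00 : a ≤ x00) (hy00 : a ≤ y00) (hx01 : a ≤ x01) (hy01 : y01 ≤ -a)
    (hx10 : x10 ≤ -a) (hy10 : a ≤ y10) (hx11 : x11 ≤ -a) (hy11 : y11 ≤ -a) :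
    4 * a - 2 ≤ p * (x00 + y00 + x11 + y11) + q * (x01 - y01 + x10 - y10)
      + (y10 - x10 - x11 - y11) - 2 := by
  linarith [mul_nonneg hp0 (by linarith : 0 ≤ x00 + y00 - 2 * a),
    mul_nonneg (sub_nonneg.mpr hp1) (by linarith : 0 ≤ -x11 - y11 - 2 * a),
    mul_nonneg hq0 (by linarith : 0 ≤ x01 - y01 - 2 * a),
    mul_nonneg (sub_nonneg.mpr hq1) (by linarith : 0 ≤ y10 - x10 - 2 * a)]

lemma pusey_bound_le_of_noise_le {δ : ℝ} (hδ0 : 0 ≤ δ) (hδ1 : 4 * Real.sqrt 2 * δ ≤ 1) :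
    2 * Real.sqrt 2 - 2 - 16 * δ + 32 * Real.sqrt 2 * δ ^ 2
      ≤ 4 * (1 / Real.sqrt 2 - 2 * δ) - 2 := by
  have hsqrt : 4 * (1 / Real.sqrt 2) = 2 * Real.sqrt 2 := by
    field_simp
    rw [Real.sq_sqrt zero_le_two]; norm_num
  linarith [mul_nonneg hδ0 (sub_nonneg.mpr hδ1)]

theorem stmt_2_general (δ p q x00 y00 x01 y01 x10 y10 x11 y11 : ℝ)
    (hδ0 : 0 ≤ δ) (hδ1 : δ < 1 / (4 * Real.sqrt 2))
    (hp0 : 0 ≤ p) (hp1 : p ≤ 1)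
    (hq0 : 0 ≤ q) (hq1 : q ≤ 1)
    (hx00 : x00 ∈ Set.Icc (1 / Real.sqrt 2 - 2 * δ) (1 / Real.sqrt 2 + 2 * δ))
    (hy00 : y00 ∈ Set.Icc (1 / Real.sqrt 2 - 2 * δ) (1 / Real.sqrt 2 + 2 * δ))
    (hx01 : x01 ∈ Set.Icc (1 / Real.sqrt 2 - 2 * δ) (1 / Real.sqrt 2 + 2 * δ))
    (hy01 : y01 ∈ Set.Icc (-(1 / Real.sqrt 2 + 2 * δ)) (-(1 / Real.sqrt 2 - 2 * δ)))
    (hx10 : x10 ∈ Set.Icc (-(1 / Real.sqrt 2 + 2 * δ)) (-(1 / Real.sqrt 2 - 2 * δ)))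
    (hy10 : y10 ∈ Set.Icc (1 / Real.sqrt 2 - 2 * δ) (1 / Real.sqrt 2 + 2 * δ))
    (hx11 : x11 ∈ Set.Icc (-(1 / Real.sqrt 2 + 2 * δ)) (-(1 / Real.sqrt 2 - 2 * δ)))
    (hy11 : y11 ∈ Set.Icc (-(1 / Real.sqrt 2 + 2 * δ)) (-(1 / Real.sqrt 2 - 2 * δ))) :
    p * (x00 + y00 + x11 + y11) + q * (x01 - y01 + x10 - y10)
      + (y10 - x10 - x11 - y11) - 2
      ≥ 2 * Real.sqrt 2 - 2 - 16 * δ + 32 * Real.sqrt 2 * δ^2 := by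
  have hδ : 4 * Real.sqrt 2 * δ ≤ 1 := by
    rw [lt_div_iff₀' (by positivity)] at hδ1
    exact hδ1.le
  exact (pusey_bound_le_of_noise_le hδ0 hδ).trans <| pusey_expression_ge hp0 hp1 hq0 hq1
    hx00.1 hy00.1 hx01.1 hy01.2 hx10.2 hy10.1 hx11.2 hy11.2

/-- Noise-bounded lower bound on Pusey's expression. -/
theorem stmt_2 (δ p q x00 y00 x01 y01 x10 y10 x11 y11 : ℝ)
    (hδ0 : 0 ≤ δ) (hδ1 : δ < 1 / (4 * Real.sqrt 2))
    (hp0 : 0 ≤ p) (hp1 : p ≤ 1) (hp : (1 - 4 * Real.sqrt 2 * δ) / 2 ≤ p)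
    (hq0 : 0 ≤ q) (hq1 : q ≤ 1) (hq : (1 - 4 * Real.sqrt 2 * δ) / 2 ≤ q)
    (hx00 : x00 ∈ Set.Icc (1 / Real.sqrt 2 - 2 * δ) (1 / Real.sqrt 2 + 2 * δ))
    (hy00 : y00 ∈ Set.Icc (1 / Real.sqrt 2 - 2 * δ) (1 / Real.sqrt 2 + 2 * δ))
    (hx01 : x01 ∈ Set.Icc (1 / Real.sqrt 2 - 2 * δ) (1 / Real.sqrt 2 + 2 * δ))
    (hy01 : y01 ∈ Set.Icc (-(1 / Real.sqrt 2 + 2 * δ)) (-(1 / Real.sqrt 2 - 2 * δ)))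
    (hx10 : x10 ∈ Set.Icc (-(1 / Real.sqrt 2 + 2 * δ)) (-(1 / Real.sqrt 2 - 2 * δ)))
    (hy10 : y10 ∈ Set.Icc (1 / Real.sqrt 2 - 2 * δ) (1 / Real.sqrt 2 + 2 * δ))
    (hx11 : x11 ∈ Set.Icc (-(1 / Real.sqrt 2 + 2 * δ)) (-(1 / Real.sqrt 2 - 2 * δ)))
    (hy11 : y11 ∈ Set.Icc (-(1 / Real.sqrt 2 + 2 * δ)) (-(1 / Real.sqrt 2 - 2 * δ))) :
    p * (x00 + y00 + x11 + y11) + q * (x01 - y01 + x10 - y10)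
      + (y10 - x10 - x11 - y11) - 2
      ≥ 2 * Real.sqrt 2 - 2 - 16 * δ + 32 * Real.sqrt 2 * δ^2 :=
  stmt_2_general δ p q x00 y00 x01 y01 x10 y10 x11 y11 hδ0 hδ1 hp0 hp1 hq0 hq1 hx00 hy00 hx01 hy01
    hx10 hy10 hx11 hy11
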